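/- Let g be a finite-dimensional nonabelian real Lie algebra that is two-step nilpotent (i.e., [g,g] ≠ 0 and [g,[g,g]] = 0), strictly nonsingular, and whose center is one-dimensional. Then there exist n ≥ 1 and a basis X₁, …, Xₙ, Y₁, …, Yₙ, Z of g such that [Xᵢ, Yᵢ] = Z for all i and all other brackets of basis elements vanish; that is, g is isomorphic to the (2n+1)-dimensional Heisenberg Lie algebra. -/

import Mathlib

open Module

/-- Symplectic-basis extraction for the bracket form with values in the line spanned by `Z`. -/
lemma aux5 {L : Type*} [LieRing L] [LieAlgebra ℝ L] [FiniteDimensional ℝ L]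
    (Z : L) (hbr : ∀ x y : L, ∃ r : ℝ, ⁅x, y⁆ = r • Z) :
    ∀ (k : ℕ) (W : Submodule ℝ L), finrank ℝ W ≤ k →
      (∀ x ∈ W, x ≠ 0 → ∃ y ∈ W, ⁅x, y⁆ ≠ 0) →
      ∃ n : ℕ, ∃ X Y : Fin n → L,
        (∀ i, X i ∈ W) ∧ (∀ i, Y i ∈ W) ∧
        (∀ i, ⁅X i, Y i⁆ = Z) ∧ (∀ i j, i ≠ j → ⁅X i, Y j⁆ = 0) ∧
        (∀ i j, ⁅X i, X j⁆ = 0) ∧ (∀ i j, ⁅Y i, Y j⁆ = 0) ∧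
        W ≤ Submodule.span ℝ (Set.range X ∪ Set.range Y) := by
  intro k
  induction k with
  | zero =>
      intro W hW _
      have hWb : W = ⊥ := Submodule.finrank_eq_zero.mp (Nat.le_zero.mp hW)
      refine ⟨0, Fin.elim0, Fin.elim0, fun i => i.elim0, fun i => i.elim0,
        fun i => i.elim0, fun i => i.elim0, fun i => i.elim0, fun i => i.elim0, ?_⟩
      rw [hWb]; exact bot_le
  | succ k ih =>
      intro W hW hnd
      by_cases hbot : W = ⊥
      · refine ⟨0, Fin.elim0, Fin.elim0, fun i => i.elim0, fun i => i.elim0,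
          fun i => i.elim0, fun i => i.elim0, fun i => i.elim0, fun i => i.elim0, ?_⟩
        rw [hbot]; exact bot_le
      · obtain ⟨e, heW, he0⟩ := Submodule.ne_bot_iff W |>.mp hbot
        obtain ⟨y, hyW, hy⟩ := hnd e heW he0
        obtain ⟨r, hry⟩ := hbr e y
        have hr : r ≠ 0 := by rintro rfl; simp at hry; exact hy hry
        have hZ : Z ≠ 0 := by
          rintro rfl; rw [smul_zero] at hry; exact hy hry
        obtain ⟨f, hfW, hef⟩ : ∃ f ∈ W, ⁅e, f⁆ = Z :=
          ⟨r⁻¹ • y, W.smul_mem _ hyW, by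
            rw [lie_smul, hry, smul_smul, inv_mul_cancel₀ hr, one_smul]⟩
        have hfe : ⁅f, e⁆ = -Z := by rw [← lie_skew, hef]
        set U : Submodule ℝ L :=
          (W ⊓ LinearMap.ker (LieAlgebra.ad ℝ L e)) ⊓ LinearMap.ker (LieAlgebra.ad ℝ L f)
          with hUdef
        have hmemU : ∀ u : L, u ∈ U ↔ (u ∈ W ∧ ⁅e, u⁆ = 0 ∧ ⁅f, u⁆ = 0) := by
          intro u
          simp [hUdef, Submodule.mem_inf, LinearMap.mem_ker, LieAlgebra.ad_apply, and_assoc]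
        have hdec : ∀ w ∈ W, ∃ a b : ℝ, ⁅e, w⁆ = a • Z ∧ ⁅f, w⁆ = b • Z ∧
            (w - a • f + b • e) ∈ U := by
          intro w hw
          obtain ⟨a, ha⟩ := hbr e w
          obtain ⟨b, hb⟩ := hbr f w
          refine ⟨a, b, ha, hb, (hmemU _).mpr ⟨?_, ?_, ?_⟩⟩
          · exact W.add_mem (W.sub_mem hw (W.smul_mem _ hfW)) (W.smul_mem _ heW)
          · simp [lie_add, lie_sub, lie_smul, ha, hef, lie_self]
          · simp [lie_add, lie_sub, lie_smul, hb, hfe, lie_self]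
        have hndU : ∀ x ∈ U, x ≠ 0 → ∃ y ∈ U, ⁅x, y⁆ ≠ 0 := by
          intro u hu hu0
          obtain ⟨huW, hue, huf⟩ := (hmemU u).mp hu
          obtain ⟨v, hvW, hv⟩ := hnd u huW hu0
          obtain ⟨a, b, _, _, hmem⟩ := hdec v hvW
          refine ⟨v - a • f + b • e, hmem, ?_⟩
          have h1 : ⁅u, f⁆ = 0 := by rw [← lie_skew, huf, neg_zero]
          have h2 : ⁅u, e⁆ = 0 := by rw [← lie_skew, hue, neg_zero]
          simpa [lie_add, lie_sub, lie_smul, h1, h2] using hv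
        have hUltW : U < W := by
          refine lt_of_le_of_ne (le_trans inf_le_left inf_le_left) ?_
          intro hUW
          have hfU : f ∈ U := hUW ▸ hfW
          have := ((hmemU f).mp hfU).2.1
          rw [hef] at this
          exact hZ this
        have hUk : finrank ℝ U ≤ k := by
          have h1 : finrank ℝ U < finrank ℝ W := Submodule.finrank_lt_finrank_of_lt hUltW
          omega
        obtain ⟨n, X, Y, hXU, hYU, hXYe, hXYne, hXX, hYY, hspan⟩ := ih U hUk hndU
        have hXW : ∀ i, X i ∈ W := fun i => ((hmemU _).mp (hXU i)).1
        have hYW : ∀ i, Y i ∈ W := fun i => ((hmemU _).mp (hYU i)).1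
        have heX : ∀ i, ⁅e, X i⁆ = 0 := fun i => ((hmemU _).mp (hXU i)).2.1
        have heY : ∀ i, ⁅e, Y i⁆ = 0 := fun i => ((hmemU _).mp (hYU i)).2.1
        have hfX : ∀ i, ⁅f, X i⁆ = 0 := fun i => ((hmemU _).mp (hXU i)).2.2
        have hfY : ∀ i, ⁅f, Y i⁆ = 0 := fun i => ((hmemU _).mp (hYU i)).2.2
        have hXe : ∀ i, ⁅X i, e⁆ = 0 := fun i => by rw [← lie_skew, heX, neg_zero]
        have hYe : ∀ i, ⁅Y i, e⁆ = 0 := fun i => by rw [← lie_skew, heY, neg_zero]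
        have hXf : ∀ i, ⁅X i, f⁆ = 0 := fun i => by rw [← lie_skew, hfX, neg_zero]
        have hYf : ∀ i, ⁅Y i, f⁆ = 0 := fun i => by rw [← lie_skew, hfY, neg_zero]
        refine ⟨n + 1, Fin.cons e X, Fin.cons f Y, ?_, ?_, ?_, ?_, ?_, ?_, ?_⟩
        · intro i
          refine Fin.cases ?_ ?_ i
          · simpa using heW
          · intro j; simpa using hXW j
        · intro i
          refine Fin.cases ?_ ?_ i
          · simpa using hfW
          · intro j; simpa using hYW j
        · intro i
          refine Fin.cases ?_ ?_ i
          · simpa using hef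
          · intro j; simpa using hXYe j
        · intro i
          refine Fin.cases ?_ ?_ i
          · intro j
            refine Fin.cases ?_ ?_ j
            · intro h; exact absurd rfl h
            · intro j' _; simpa using heY j'
          · intro i' j
            refine Fin.cases ?_ ?_ j
            · intro _; simpa using hXf i'
            · intro j' hne
              have : i' ≠ j' := by
                intro h; apply hne; rw [h]
              simpa using hXYne i' j' this
        · intro i j
          refine Fin.cases ?_ ?_ i
          · refine Fin.cases ?_ ?_ j
            · simp
            · intro j'; simpa using heX j'
          · intro i'
            refine Fin.cases ?_ ?_ j
            · simpa using hXe i'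
            · intro j'; simpa using hXX i' j'
        · intro i j
          refine Fin.cases ?_ ?_ i
          · refine Fin.cases ?_ ?_ j
            · simp
            · intro j'; simpa using hfY j'
          · intro i'
            refine Fin.cases ?_ ?_ j
            · simpa using hYf i'
            · intro j'; simpa using hYY i' j'
        · intro w hw
          obtain ⟨a, b, _, _, hmem⟩ := hdec w hw
          have hsub : Set.range X ∪ Set.range Y ⊆
              Set.range (Fin.cons e X : Fin (n+1) → L) ∪
              Set.range (Fin.cons f Y : Fin (n+1) → L) := by
            rw [Fin.range_cons, Fin.range_cons]
            exact Set.union_subset_union (Set.subset_insert _ _) (Set.subset_insert _ _)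
          have hu : (w - a • f + b • e) ∈
              Submodule.span ℝ (Set.range (Fin.cons e X : Fin (n+1) → L) ∪
                Set.range (Fin.cons f Y : Fin (n+1) → L)) :=
            Submodule.span_mono hsub (hspan hmem)
          have he' : e ∈ Submodule.span ℝ (Set.range (Fin.cons e X : Fin (n+1) → L) ∪
              Set.range (Fin.cons f Y : Fin (n+1) → L)) := by
            apply Submodule.subset_span
            left; rw [Fin.range_cons]; exact Set.mem_insert _ _
          have hf' : f ∈ Submodule.span ℝ (Set.range (Fin.cons e X : Fin (n+1) → L) ∪
              Set.range (Fin.cons f Y : Fin (n+1) → L)) := by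
            apply Submodule.subset_span
            right; rw [Fin.range_cons]; exact Set.mem_insert _ _
          have hweq : w = (w - a • f + b • e) + a • f - b • e := by abel
          rw [hweq]
          exact Submodule.sub_mem _ (Submodule.add_mem _ hu (Submodule.smul_mem _ _ hf'))
            (Submodule.smul_mem _ _ he')

/-- A finite-dimensional nonabelian real Lie algebra that is two-step nilpotent,
strictly nonsingular, and has one-dimensional center admits a basis
X₁,…,Xₙ, Y₁,…,Yₙ, Z (n ≥ 1) with [Xᵢ,Yᵢ] = Z and all other brackets of basis
elements zero; i.e. it is a (2n+1)-dimensional Heisenberg Lie algebra. -/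
theorem stmt5 (L : Type*) [LieRing L] [LieAlgebra ℝ L] [FiniteDimensional ℝ L]
    (hnonab : ∃ x y : L, ⁅x, y⁆ ≠ 0)
    (h2step : ∀ x y z : L, ⁅x, ⁅y, z⁆⁆ = 0)
    (hSN : ∀ X : L, X ∉ LieAlgebra.center ℝ L →
      ∀ Z ∈ LieAlgebra.center ℝ L, ∃ Y : L, ⁅X, Y⁆ = Z)
    (hcen : Module.finrank ℝ ↥(LieAlgebra.center ℝ L) = 1) :
    ∃ n : ℕ, 1 ≤ n ∧ ∃ b : Basis (Fin n ⊕ Fin n ⊕ Unit) ℝ L,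
      (∀ i, ⁅b (Sum.inl i), b (Sum.inr (Sum.inl i))⁆ = b (Sum.inr (Sum.inr ()))) ∧
      (∀ i j, i ≠ j → ⁅b (Sum.inl i), b (Sum.inr (Sum.inl j))⁆ = 0) ∧
      (∀ i j, ⁅b (Sum.inl i), b (Sum.inl j)⁆ = 0) ∧
      (∀ i j, ⁅b (Sum.inr (Sum.inl i)), b (Sum.inr (Sum.inl j))⁆ = 0) ∧
      (∀ i, ⁅b (Sum.inl i), b (Sum.inr (Sum.inr ()))⁆ = 0) ∧
      (∀ i, ⁅b (Sum.inr (Sum.inl i)), b (Sum.inr (Sum.inr ()))⁆ = 0) := by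
  classical
  have hmemC : ∀ m : L, m ∈ LieAlgebra.center ℝ L ↔ ∀ x : L, ⁅x, m⁆ = 0 :=
    fun m => LieModule.mem_maxTrivSubmodule ℝ L L m
  obtain ⟨Z₀, hZ₀ne, hZ₀span⟩ := finrank_eq_one_iff'.mp hcen
  set Z : L := (Z₀ : L) with hZdef
  have hZ : Z ≠ 0 := by
    intro h; exact hZ₀ne (Subtype.ext h)
  have hZmem : Z ∈ LieAlgebra.center ℝ L := Z₀.2
  have hZc : ∀ x : L, ⁅x, Z⁆ = 0 := (hmemC _).mp hZmem
  have hbr : ∀ x y : L, ∃ r : ℝ, ⁅x, y⁆ = r • Z := by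
    intro x y
    have hxy : ⁅x, y⁆ ∈ LieAlgebra.center ℝ L := (hmemC _).mpr (fun a => h2step a x y)
    obtain ⟨r, hr⟩ := hZ₀span ⟨⁅x, y⁆, hxy⟩
    refine ⟨r, ?_⟩
    have := congrArg (Subtype.val) hr
    simpa [hZdef] using this.symm
  obtain ⟨W₀, hcompl⟩ := Submodule.exists_isCompl (LieAlgebra.center ℝ L).toSubmodule
  have hnd : ∀ x ∈ W₀, x ≠ 0 → ∃ y ∈ W₀, ⁅x, y⁆ ≠ 0 := by
    intro x hx hx0
    have hxC : x ∉ LieAlgebra.center ℝ L := by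
      intro hxC
      exact hx0 (Submodule.disjoint_def.mp hcompl.disjoint x hxC hx)
    obtain ⟨y, hy⟩ := hSN x hxC Z hZmem
    have hytop : y ∈ (LieAlgebra.center ℝ L).toSubmodule ⊔ W₀ := by
      rw [hcompl.sup_eq_top]; trivial
    obtain ⟨c, hc, w, hw, rfl⟩ := Submodule.mem_sup.mp hytop
    refine ⟨w, hw, ?_⟩
    have hxc : ⁅x, c⁆ = 0 := (hmemC c).mp hc x
    rw [lie_add, hxc, zero_add] at hy
    rw [hy]; exact hZ
  obtain ⟨n, X, Y, hXW, hYW, hXYe, hXYne, hXX, hYY, hspan⟩ :=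
    aux5 Z hbr (finrank ℝ W₀) W₀ le_rfl hnd
  have hn : 1 ≤ n := by
    rcases Nat.eq_zero_or_pos n with rfl | h
    · exfalso
      have hXe : Set.range X = (∅ : Set L) := Set.range_eq_empty X
      have hYe : Set.range Y = (∅ : Set L) := Set.range_eq_empty Y
      rw [hXe, hYe, Set.union_empty, Submodule.span_empty] at hspan
      have hW0 : W₀ = ⊥ := le_bot_iff.mp hspan
      obtain ⟨x, y, hxy⟩ := hnonab
      have : y ∈ (LieAlgebra.center ℝ L).toSubmodule ⊔ W₀ := by
        rw [hcompl.sup_eq_top]; trivial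
      rw [hW0, sup_bot_eq] at this
      exact hxy ((hmemC y).mp this x)
    · exact h
  -- the candidate basis family
  set b : Fin n ⊕ Fin n ⊕ Unit → L := Sum.elim X (Sum.elim Y fun _ => Z) with hbdef
  have hbX : ∀ i, b (Sum.inl i) = X i := fun i => rfl
  have hbY : ∀ i, b (Sum.inr (Sum.inl i)) = Y i := fun i => rfl
  have hbZ : b (Sum.inr (Sum.inr ())) = Z := rfl
  -- spanning
  have hsp : ⊤ ≤ Submodule.span ℝ (Set.range b) := by
    rw [← hcompl.sup_eq_top]
    apply sup_le
    · intro c hc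
      obtain ⟨r, hr⟩ := hZ₀span ⟨c, hc⟩
      have hcr : c = r • Z := by
        have := congrArg (Subtype.val) hr
        simpa [hZdef] using this.symm
      rw [hcr]
      exact Submodule.smul_mem _ _ (Submodule.subset_span ⟨Sum.inr (Sum.inr ()), rfl⟩)
    · refine le_trans hspan (Submodule.span_mono ?_)
      rintro v (⟨i, rfl⟩ | ⟨i, rfl⟩)
      · exact ⟨Sum.inl i, rfl⟩
      · exact ⟨Sum.inr (Sum.inl i), rfl⟩
  -- linear independence
  have hli : LinearIndependent ℝ b := by
    rw [Fintype.linearIndependent_iff]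
    intro g hg
    have hgX : ∀ j, g (Sum.inl j) = 0 := by
      intro j
      have h2 := congrArg (LieAlgebra.ad ℝ L (Y j)) hg
      rw [map_sum, map_zero] at h2
      simp only [map_smul, LieAlgebra.ad_apply] at h2
      rw [Fintype.sum_sum_type, Fintype.sum_sum_type] at h2
      have e1 : ∑ i : Fin n, g (Sum.inl i) • ⁅Y j, b (Sum.inl i)⁆
          = -(g (Sum.inl j)) • Z := by
        have : ∀ i : Fin n, g (Sum.inl i) • ⁅Y j, b (Sum.inl i)⁆
            = if i = j then (-(g (Sum.inl i))) • Z else 0 := by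
          intro i
          rw [hbX]
          by_cases hij : i = j
          · subst hij
            rw [if_pos rfl, ← lie_skew, hXYe i, neg_smul, smul_neg]
          · rw [if_neg hij, ← lie_skew, hXYne i j hij, neg_zero, smul_zero]
        rw [Finset.sum_congr rfl (fun i _ => this i), Finset.sum_ite_eq']
        simp
      have e2 : ∑ i : Fin n, g (Sum.inr (Sum.inl i)) • ⁅Y j, b (Sum.inr (Sum.inl i))⁆
          = 0 := by
        apply Finset.sum_eq_zero
        intro i _
        rw [hbY, hYY j i, smul_zero]
      have e3 : ∑ u : Unit, g (Sum.inr (Sum.inr u)) • ⁅Y j, b (Sum.inr (Sum.inr u))⁆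
          = 0 := by
        apply Finset.sum_eq_zero
        intro u _
        have : b (Sum.inr (Sum.inr u)) = Z := rfl
        rw [this, hZc, smul_zero]
      rw [e1, e2, e3, add_zero, add_zero] at h2
      rcases smul_eq_zero.mp h2 with h | h
      · linarith [h]
      · exact absurd h hZ
    have hgY : ∀ j, g (Sum.inr (Sum.inl j)) = 0 := by
      intro j
      have h2 := congrArg (LieAlgebra.ad ℝ L (X j)) hg
      rw [map_sum, map_zero] at h2
      simp only [map_smul, LieAlgebra.ad_apply] at h2
      rw [Fintype.sum_sum_type, Fintype.sum_sum_type] at h2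
      have e1 : ∑ i : Fin n, g (Sum.inl i) • ⁅X j, b (Sum.inl i)⁆ = 0 := by
        apply Finset.sum_eq_zero
        intro i _
        rw [hbX, hXX j i, smul_zero]
      have e2 : ∑ i : Fin n, g (Sum.inr (Sum.inl i)) • ⁅X j, b (Sum.inr (Sum.inl i))⁆
          = g (Sum.inr (Sum.inl j)) • Z := by
        have : ∀ i : Fin n, g (Sum.inr (Sum.inl i)) • ⁅X j, b (Sum.inr (Sum.inl i))⁆
            = if i = j then g (Sum.inr (Sum.inl i)) • Z else 0 := by
          intro i
          rw [hbY]
          by_cases hij : i = j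
          · subst hij
            rw [if_pos rfl, hXYe i]
          · rw [if_neg hij, hXYne j i (fun h => hij h.symm), smul_zero]
        rw [Finset.sum_congr rfl (fun i _ => this i), Finset.sum_ite_eq']
        simp
      have e3 : ∑ u : Unit, g (Sum.inr (Sum.inr u)) • ⁅X j, b (Sum.inr (Sum.inr u))⁆
          = 0 := by
        apply Finset.sum_eq_zero
        intro u _
        have : b (Sum.inr (Sum.inr u)) = Z := rfl
        rw [this, hZc, smul_zero]
      rw [e1, e2, e3, zero_add, add_zero] at h2
      rcases smul_eq_zero.mp h2 with h | h
      · exact h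
      · exact absurd h hZ
    have hgZ : g (Sum.inr (Sum.inr ())) = 0 := by
      rw [Fintype.sum_sum_type, Fintype.sum_sum_type] at hg
      have e1 : ∑ i : Fin n, g (Sum.inl i) • b (Sum.inl i) = 0 := by
        apply Finset.sum_eq_zero
        intro i _
        rw [hgX i, zero_smul]
      have e2 : ∑ i : Fin n, g (Sum.inr (Sum.inl i)) • b (Sum.inr (Sum.inl i)) = 0 := by
        apply Finset.sum_eq_zero
        intro i _
        rw [hgY i, zero_smul]
      have e3 : ∑ u : Unit, g (Sum.inr (Sum.inr u)) • b (Sum.inr (Sum.inr u))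
          = g (Sum.inr (Sum.inr ())) • Z := by
        simp [hbdef]
      rw [e1, e2, e3, zero_add, zero_add] at hg
      rcases smul_eq_zero.mp hg with h | h
      · exact h
      · exact absurd h hZ
    rintro (i | i | ⟨⟩)
    · exact hgX i
    · exact hgY i
    · exact hgZ
  refine ⟨n, hn, Basis.mk hli hsp, ?_, ?_, ?_, ?_, ?_, ?_⟩
  · intro i; rw [Basis.coe_mk, hbX, hbY, hbZ]; exact hXYe i
  · intro i j hij; rw [Basis.coe_mk, hbX, hbY]; exact hXYne i j hij
  · intro i j; rw [Basis.coe_mk, hbX, hbX]; exact hXX i j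
  · intro i j; rw [Basis.coe_mk, hbY, hbY]; exact hYY i j
  · intro i; rw [Basis.coe_mk, hbX, hbZ]; exact hZc _
  · intro i; rw [Basis.coe_mk, hbY, hbZ]; exact hZc _
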